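/- arXiv:2203.04744 — 4 statements merged into one kernel-verified Lean document; each statement's English description precedes it below -/
import Mathlib

section
/- Let $0 < \alpha < 1$ and let $b \in \mathbb{N}$ with $b > 1$. Then the Weierstrass-type function $f(t) = \sum_{j=0}^\infty b^{-j\alpha} \cos(b^j t)$ is Hölder continuous on $\mathbb{R}$ with exponent $\alpha$. -/
/-!
Write `r = b ^ (-α)` and `q = b ^ (1 - α) = r * b`. The `j`-th term of `f s - f t` is bounded
both by `2 * r ^ j` (cosine is bounded) and by `|s - t| * q ^ j` (cosine is `1`-Lipschitz).
Using the second bound for `j < N` and the first for `j ≥ N`, where `b ^ N` is comparable to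
`|s - t|⁻¹`, both the geometric partial sum and the geometric tail are `O(|s - t| ^ α)`.
-/

open Real Finset

theorem abs_tsum_le_of_abs_le_geometric {u : ℕ → ℝ} {A B r q : ℝ} (hr0 : 0 ≤ r) (hr1 : r < 1)
    (hq : 1 < q) (hA : ∀ j, |u j| ≤ A * r ^ j) (hB : ∀ j, |u j| ≤ B * q ^ j) (N : ℕ) :
    |∑' j, u j| ≤ B * ((q ^ N - 1) / (q - 1)) + A * (r ^ N / (1 - r)) := by
  have hgeom := summable_geometric_of_lt_one hr0 hr1
  have hsum : Summable fun j => |u j| :=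
    .of_nonneg_of_le (fun j => abs_nonneg _) hA (hgeom.mul_left A)
  calc |∑' j, u j| ≤ ∑' j, |u j| := by
        simpa only [Real.norm_eq_abs] using norm_tsum_le_tsum_norm (f := u) hsum
    _ = ∑ j ∈ range N, |u j| + ∑' k, |u (k + N)| := (hsum.sum_add_tsum_nat_add N).symm
    _ ≤ ∑ j ∈ range N, B * q ^ j + ∑' k, A * r ^ N * r ^ k := by
        refine add_le_add (sum_le_sum fun j _ => hB j) (Summable.tsum_le_tsum (fun k => ?_)
          (hsum.comp_injective (add_left_injective N)) (hgeom.mul_left _))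
        simpa only [pow_add, mul_comm, mul_left_comm, mul_assoc] using hA (k + N)
    _ = B * ((q ^ N - 1) / (q - 1)) + A * (r ^ N / (1 - r)) := by
        rw [← mul_sum, geom_sum_eq hq.ne', tsum_mul_left, tsum_geometric_of_lt_one hr0 hr1]
        ring

theorem exists_holder_cutoff {b α h : ℝ} (hb : 1 < b) (hα0 : 0 < α) (hα1 : α < 1) (hh : 0 < h) :
    ∃ N : ℕ, h * ((b ^ (1 - α)) ^ N - 1) ≤ b ^ (1 - α) * h ^ α ∧ (b ^ (-α)) ^ N ≤ h ^ α := by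
  have hb0 : 0 < b := one_pos.trans hb
  rcases le_or_gt 1 h with h1 | h1
  · refine ⟨0, ?_, ?_⟩
    · simp only [pow_zero, sub_self, mul_zero]; positivity
    · simpa using one_le_rpow h1 hα0.le
  obtain ⟨n, hn, hn'⟩ := exists_nat_pow_near (one_le_inv₀ hh |>.2 h1.le) hb
  set x := b ^ (n + 1)
  have hx : 0 < x := by positivity
  have hxh : 1 < x * h := calc
    1 = h⁻¹ * h := (inv_mul_cancel₀ hh.ne').symm
    _ < x * h := by gcongr
  have hxh' : x * h ≤ b := calc
    x * h = b ^ n * h * b := by rw [show x = b ^ n * b from pow_succ b n]; ring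
    _ ≤ h⁻¹ * h * b := by gcongr
    _ = b := by rw [inv_mul_cancel₀ hh.ne', one_mul]
  refine ⟨n + 1, ?_, ?_⟩
  · rw [rpow_pow_comm hb0.le]
    calc h * (x ^ (1 - α) - 1) ≤ h * x ^ (1 - α) := by gcongr; exact sub_le_self _ zero_le_one
      _ = h ^ α * (x * h) ^ (1 - α) := by
          rw [mul_rpow hx.le hh.le, mul_left_comm, ← rpow_add hh, add_sub_cancel, rpow_one,
            mul_comm]
      _ ≤ b ^ (1 - α) * h ^ α := by
          rw [mul_comm]; gcongr
  · rw [rpow_pow_comm hb0.le, rpow_neg hx.le, ← inv_rpow hx.le]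
    gcongr
    rw [inv_le_iff_one_le_mul₀' hx]; exact hxh.le

theorem rpow_neg_natCast_mul {b : ℝ} (hb : 0 < b) (j : ℕ) (α : ℝ) :
    b ^ (-(j : ℝ) * α) = (b ^ (-α)) ^ j := by
  rw [← rpow_natCast, ← rpow_mul hb.le]
  ring_nf

theorem abs_rpow_mul_cos_sub {b α : ℝ} (hb : 0 < b) (j : ℕ) (s t : ℝ) :
    |b ^ (-(j : ℝ) * α) * cos (b ^ j * s) - b ^ (-(j : ℝ) * α) * cos (b ^ j * t)|
      = (b ^ (-α)) ^ j * |cos (b ^ j * s) - cos (b ^ j * t)| := by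
  rw [← mul_sub, abs_mul, rpow_neg_natCast_mul hb, abs_of_nonneg (by positivity)]

theorem abs_rpow_mul_cos_sub_le_two {b α : ℝ} (hb : 0 < b) (j : ℕ) (s t : ℝ) :
    |b ^ (-(j : ℝ) * α) * cos (b ^ j * s) - b ^ (-(j : ℝ) * α) * cos (b ^ j * t)|
      ≤ 2 * (b ^ (-α)) ^ j := by
  rw [abs_rpow_mul_cos_sub hb, mul_comm]
  gcongr
  linarith [abs_sub (cos (b ^ j * s)) (cos (b ^ j * t)), abs_cos_le_one (b ^ j * s),
    abs_cos_le_one (b ^ j * t)]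

theorem abs_rpow_mul_cos_sub_le_lipschitz {b α : ℝ} (hb : 0 < b) (j : ℕ) (s t : ℝ) :
    |b ^ (-(j : ℝ) * α) * cos (b ^ j * s) - b ^ (-(j : ℝ) * α) * cos (b ^ j * t)|
      ≤ |s - t| * (b ^ (1 - α)) ^ j := by
  calc _ ≤ (b ^ (-α)) ^ j * |b ^ j * s - b ^ j * t| := by
        rw [abs_rpow_mul_cos_sub hb]
        exact mul_le_mul_of_nonneg_left (abs_cos_sub_cos_le _ _) (by positivity)
    _ = |s - t| * (b ^ (1 - α)) ^ j := by
        rw [← mul_sub, abs_mul, abs_of_pos (by positivity), ← mul_assoc, ← mul_pow,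
          ← rpow_add_one hb.ne', neg_add_eq_sub, mul_comm]

theorem summable_rpow_mul_cos {b α : ℝ} (hb : 1 < b) (hα : 0 < α) (t : ℝ) :
    Summable fun j : ℕ => b ^ (-(j : ℝ) * α) * cos (b ^ j * t) := by
  have hb0 : 0 < b := one_pos.trans hb
  refine .of_norm_bounded (summable_geometric_of_lt_one (by positivity)
    (rpow_lt_one_of_one_lt_of_neg hb (neg_lt_zero.2 hα))) fun j => ?_
  rw [norm_mul, Real.norm_eq_abs, Real.norm_eq_abs, rpow_neg_natCast_mul hb0,
    abs_of_nonneg (by positivity)]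
  exact mul_le_of_le_one_right (by positivity) (abs_cos_le_one _)

/-- **The Weierstrass-type function is `α`-Hölder.**
For `0 < α < 1` and an integer `b > 1`, the function
`f t = ∑' j, b ^ (-j * α) * cos (b ^ j * t)` is Hölder continuous with exponent `α`. -/
theorem weierstrass_holder
    (α : ℝ) (hα0 : 0 < α) (hα1 : α < 1) (b : ℕ) (hb : 1 < b)
    (f : ℝ → ℝ)
    (hf : ∀ t : ℝ, f t = ∑' j : ℕ, (b : ℝ) ^ (-(j : ℝ) * α) * Real.cos ((b : ℝ) ^ j * t)) :
    ∃ C : ℝ, ∀ s t : ℝ, |f s - f t| ≤ C * |s - t| ^ α := by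
  have hb1 : (1 : ℝ) < b := by exact_mod_cast hb
  have hb0 : (0 : ℝ) < b := one_pos.trans hb1
  set r : ℝ := (b : ℝ) ^ (-α)
  set q : ℝ := (b : ℝ) ^ (1 - α)
  have hr1 : r < 1 := rpow_lt_one_of_one_lt_of_neg hb1 (neg_lt_zero.2 hα0)
  have hq1 : 1 < q := one_lt_rpow hb1 (sub_pos.2 hα1)
  refine ⟨q / (q - 1) + 2 / (1 - r), fun s t => ?_⟩
  rcases eq_or_ne s t with rfl | hst
  · simp [zero_rpow hα0.ne']
  obtain ⟨N, hqN, hrN⟩ := exists_holder_cutoff hb1 hα0 hα1 (abs_pos.2 (sub_ne_zero.2 hst))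
  rw [hf, hf, ← (summable_rpow_mul_cos hb1 hα0 s).tsum_sub (summable_rpow_mul_cos hb1 hα0 t)]
  calc _ ≤ |s - t| * ((q ^ N - 1) / (q - 1)) + 2 * (r ^ N / (1 - r)) :=
        abs_tsum_le_of_abs_le_geometric (by positivity) hr1 hq1
          (abs_rpow_mul_cos_sub_le_two hb0 · s t) (abs_rpow_mul_cos_sub_le_lipschitz hb0 · s t) N
    _ ≤ q * |s - t| ^ α / (q - 1) + 2 * (|s - t| ^ α / (1 - r)) := by
        rw [← mul_div_assoc]
        gcongr
    _ = (q / (q - 1) + 2 / (1 - r)) * |s - t| ^ α := by ring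
end

section
/- Let $0 < \alpha < 1$ and let $b \in \mathbb{N}$ with $b > 1$. Then for any $\beta$ with $\alpha < \beta \le 1$, the function $f(t) = \sum_{j=0}^\infty b^{-j\alpha} \cos(b^j t)$ is not Hölder continuous on $\mathbb{R}$ with exponent $\beta$. -/
/-!
Every term of `f 0 - f t = ∑ b^{-jα} (1 - cos (b^j t))` is nonnegative, so the single term
`j = J` bounds it from below. At `t = 2π / b^{J+1}` that term is `b^{-Jα} (1 - cos (2π / b))`,
while a `β`-Hölder bound gives `f 0 - f t ≤ C t^β ≍ b^{-Jβ}`; as `J → ∞` this forces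
`b^{-J(β - α)}` to stay bounded away from `0`, which fails for `β > α`.
-/

open Real Filter Topology

theorem summable_rpow_neg_natCast_mul {x : ℝ} (hx : 1 < x) {α : ℝ} (hα : 0 < α) :
    Summable fun j : ℕ => x ^ (-(j : ℝ) * α) := by
  have hr : x ^ (-α) < 1 := rpow_lt_one_of_one_lt_of_neg hx (neg_lt_zero.2 hα)
  refine (summable_geometric_of_lt_one (rpow_nonneg (by linarith) _) hr).congr fun j => ?_
  rw [← rpow_natCast, ← rpow_mul (by linarith), mul_comm, neg_mul_comm]

theorem mul_one_sub_cos_le_tsum_sub {ι : Type*} {a : ι → ℝ} (ha : Summable a) (ha0 : 0 ≤ a)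
    (ω : ι → ℝ) (t : ℝ) (J : ι) :
    a J * (1 - cos (ω J * t)) ≤ ∑' j, a j - ∑' j, a j * cos (ω j * t) := by
  have hcos : Summable fun j => a j * cos (ω j * t) :=
    ha.of_norm_bounded fun j => by
      rw [norm_mul, Real.norm_of_nonneg (ha0 j)]
      exact mul_le_of_le_one_right (ha0 j) (abs_cos_le_one _)
  rw [← ha.tsum_sub hcos]
  simp_rw [← mul_one_sub]
  refine ((ha.sub hcos).congr fun j => (mul_one_sub _ _).symm).le_tsum J fun j _ => ?_
  exact mul_nonneg (ha0 j) (sub_nonneg.2 (cos_le_one _))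

theorem one_sub_cos_pos {x : ℝ} (h0 : 0 < x) (h1 : x < 2 * π) : 0 < 1 - cos x :=
  sub_pos.2 <| (cos_le_one x).lt_of_ne fun h =>
    h0.ne' ((cos_eq_one_iff_of_lt_of_lt (by linarith) h1).1 h)

theorem not_forall_mul_rpow_le_mul_rpow {x : ℝ} (hx : 1 < x) {α β K : ℝ} (hαβ : α < β)
    (hK : 0 < K) (D : ℝ) :
    ¬ ∀ J : ℕ, K * x ^ (-(J : ℝ) * α) ≤ D * x ^ (-(J : ℝ) * β) := by
  intro h
  have hx0 : 0 < x := by linarith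
  have hρ : x ^ (-(β - α)) < 1 := rpow_lt_one_of_one_lt_of_neg hx (by linarith)
  have hbound : ∀ J : ℕ, K ≤ D * (x ^ (-(β - α))) ^ J := fun J => by
    have hJ := mul_le_mul_of_nonneg_right (h J) (rpow_nonneg hx0.le ((J : ℝ) * α))
    rwa [mul_assoc, mul_assoc, ← rpow_add hx0, ← rpow_add hx0, neg_mul, neg_add_cancel,
      rpow_zero, mul_one, show -(J : ℝ) * β + J * α = -(β - α) * J by ring,
      rpow_mul hx0.le, rpow_natCast] at hJ
  have hlim : Tendsto (fun J : ℕ => D * (x ^ (-(β - α))) ^ J) atTop (𝓝 0) := by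
    simpa using (tendsto_pow_atTop_nhds_zero_of_lt_one (rpow_nonneg hx0.le _) hρ).const_mul D
  obtain ⟨J, hJ⟩ := (hlim.eventually (gt_mem_nhds hK)).exists
  exact (hbound J).not_gt hJ

theorem weierstrass_not_holder_gt_general
    (α : ℝ) (hα0 : 0 < α) (b : ℕ) (hb : 1 < b)
    (f : ℝ → ℝ)
    (hf : ∀ t : ℝ, f t = ∑' j : ℕ, (b : ℝ) ^ (-(j : ℝ) * α) * Real.cos ((b : ℝ) ^ j * t))
    (β : ℝ) (hβα : α < β) :
    ¬ ∃ C : ℝ, ∀ s t : ℝ, |f s - f t| ≤ C * |s - t| ^ β := by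
  rintro ⟨C, hC⟩
  have hb1 : (1 : ℝ) < b := by exact_mod_cast hb
  have hb0 : (0 : ℝ) < b := by linarith
  have hf0 : f 0 = ∑' j : ℕ, (b : ℝ) ^ (-(j : ℝ) * α) := by simp [hf]
  have hK : 0 < 1 - cos (2 * π / b) :=
    one_sub_cos_pos (div_pos (by positivity) hb0) (div_lt_self (by positivity) hb1)
  refine not_forall_mul_rpow_le_mul_rpow hb1 hβα hK (C * (2 * π / b) ^ β) fun J => ?_
  set t := 2 * π / b * (b : ℝ) ^ (-(J : ℝ)) with ht_def
  have ht : 0 < t := by positivity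
  have hbt : (b : ℝ) ^ J * t = 2 * π / b := by
    rw [ht_def, rpow_neg hb0.le, rpow_natCast]
    field_simp
  calc (1 - cos (2 * π / b)) * (b : ℝ) ^ (-(J : ℝ) * α)
      = (b : ℝ) ^ (-(J : ℝ) * α) * (1 - cos ((b : ℝ) ^ J * t)) := by rw [hbt, mul_comm]
    _ ≤ f 0 - f t := by
      rw [hf0, hf t]
      exact mul_one_sub_cos_le_tsum_sub (summable_rpow_neg_natCast_mul hb1 hα0)
        (fun j => rpow_nonneg hb0.le _) (fun j : ℕ => (b : ℝ) ^ j) t J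
    _ ≤ C * |0 - t| ^ β := (le_abs_self _).trans (hC 0 t)
    _ = C * (2 * π / b) ^ β * (b : ℝ) ^ (-(J : ℝ) * β) := by
      rw [zero_sub, abs_neg, abs_of_pos ht, mul_rpow (by positivity) (by positivity),
        ← rpow_mul hb0.le, mul_assoc]

/-- **The Weierstrass-type function is not `β`-Hölder for `β > α`.**
For `0 < α < 1`, integer `b > 1`, and any `β` with `α < β ≤ 1`, the function
`f t = ∑' j, b ^ (-j * α) * cos (b ^ j * t)` is not Hölder continuous with exponent `β`. -/
theorem weierstrass_not_holder_gt
    (α : ℝ) (hα0 : 0 < α) (hα1 : α < 1) (b : ℕ) (hb : 1 < b)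
    (f : ℝ → ℝ)
    (hf : ∀ t : ℝ, f t = ∑' j : ℕ, (b : ℝ) ^ (-(j : ℝ) * α) * Real.cos ((b : ℝ) ^ j * t))
    (β : ℝ) (hβα : α < β) (hβ1 : β ≤ 1) :
    ¬ ∃ C : ℝ, ∀ s t : ℝ, |f s - f t| ≤ C * |s - t| ^ β :=
  weierstrass_not_holder_gt_general α hα0 b hb f hf β hβα
end

section
/- Let $b \in \mathbb{N}$ with $b > 1$. Then the function $f(t) = \sum_{j=1}^\infty \frac{\cos(b^j t)}{j^2}$ is continuous on $\mathbb{R}$ but is not Hölder continuous with exponent $\beta$ for any $\beta \in (0,1]$. -/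
/-!
Every term of `f 0 - f t = ∑ (1 - cos (b ^ j t)) / j ^ 2` is nonnegative, and at
`t = π / b ^ m` the `m`-th term alone equals `2 / m ^ 2`. A Hölder bound of exponent `β`
would give `2 / m ^ 2 ≤ C π ^ β / (b ^ β) ^ m` for all `m`, which fails since the geometric
sequence `(b ^ β) ^ m` outgrows `m ^ 2`.
-/

open Real Filter

theorem continuous_tsum_mul_cos {a ω : ℕ → ℝ} (ha : Summable fun j => ‖a j‖) :
    Continuous fun t => ∑' j, a j * cos (ω j * t) := by
  refine continuous_tsum (fun j => by fun_prop) ha fun j t => ?_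
  rw [norm_mul]
  exact mul_le_of_le_one_right (norm_nonneg _) (by simpa using abs_cos_le_one _)

theorem mul_one_sub_cos_le_tsum_sub_tsum_mul_cos {a : ℕ → ℝ} (ω : ℕ → ℝ) (ha : Summable a)
    (ha0 : ∀ j, 0 ≤ a j) (t : ℝ) (n : ℕ) :
    a n * (1 - cos (ω n * t)) ≤ ∑' j, a j - ∑' j, a j * cos (ω j * t) := by
  have hcos : Summable fun j => a j * cos (ω j * t) :=
    ha.of_norm_bounded fun j => by
      rw [norm_mul, norm_of_nonneg (ha0 j)]
      exact mul_le_of_le_one_right (ha0 j) (by simpa using abs_cos_le_one _)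
  rw [← ha.tsum_sub hcos]
  have hsub : Summable fun j => a j * (1 - cos (ω j * t)) :=
    (ha.sub hcos).congr fun j => by ring
  calc a n * (1 - cos (ω n * t)) ≤ ∑' j, a j * (1 - cos (ω j * t)) :=
        hsub.le_tsum n fun j _ => mul_nonneg (ha0 j) (sub_nonneg.2 (cos_le_one _))
    _ = ∑' j, (a j - a j * cos (ω j * t)) := tsum_congr fun j => by ring

theorem two_mul_le_tsum_sub_tsum_mul_cos_pow_mul_pi_div_pow {a : ℕ → ℝ} {b : ℝ} (hb : 0 < b)
    (ha : Summable a) (ha0 : ∀ j, 0 ≤ a j) (n : ℕ) :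
    2 * a n ≤ ∑' j, a j - ∑' j, a j * cos (b ^ (j + 1) * (π / b ^ (n + 1))) := by
  have h := mul_one_sub_cos_le_tsum_sub_tsum_mul_cos (fun j => b ^ (j + 1)) ha ha0
    (π / b ^ (n + 1)) n
  rwa [mul_div_cancel₀ _ (by positivity), cos_pi, sub_neg_eq_add, one_add_one_eq_two,
    mul_comm] at h

theorem div_pow_rpow {x y : ℝ} (hx : 0 ≤ x) (hy : 0 ≤ y) (m : ℕ) (β : ℝ) :
    (x / y ^ m) ^ β = x ^ β / (y ^ β) ^ m := by
  rw [div_rpow hx (by positivity), ← rpow_natCast_mul hy, mul_comm, rpow_mul_natCast hy]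

theorem eventually_mul_sq_lt_pow {r : ℝ} (hr : 1 < r) (C : ℝ) :
    ∀ᶠ n : ℕ in atTop, C * (n : ℝ) ^ 2 < r ^ n := by
  have hlim := (tendsto_pow_const_div_const_pow_of_one_lt 2 hr).const_mul C
  rw [mul_zero] at hlim
  filter_upwards [hlim.eventually (gt_mem_nhds one_pos)] with n hn
  have hrn : 0 < r ^ n := pow_pos (one_pos.trans hr) n
  rwa [← mul_div_assoc, div_lt_one hrn] at hn

/-- **Hardy-type function: continuous but not Hölder for any positive exponent.**
For an integer `b > 1`, the function `f t = ∑_{j ≥ 1} cos (b ^ j * t) / j ^ 2` is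
continuous on `ℝ` but not Hölder continuous with exponent `β` for any `β ∈ (0, 1]`. -/
theorem hardy_not_holder
    (b : ℕ) (hb : 1 < b) (f : ℝ → ℝ)
    (hf : ∀ t : ℝ, f t = ∑' j : ℕ, Real.cos ((b : ℝ) ^ (j + 1) * t) / ((j : ℝ) + 1) ^ 2) :
    Continuous f ∧
      ∀ β : ℝ, 0 < β → β ≤ 1 → ¬ ∃ C : ℝ, ∀ s t : ℝ, |f s - f t| ≤ C * |s - t| ^ β := by
  set a : ℕ → ℝ := fun j => (((j : ℝ) + 1) ^ 2)⁻¹ with ha_def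
  have ha0 : ∀ j, 0 ≤ a j := fun j => by positivity
  have ha : Summable a := by
    simpa [ha_def] using (summable_nat_add_iff 1).2 (Real.summable_nat_pow_inv.2 one_lt_two)
  have hfa : f = fun t => ∑' j, a j * cos ((b : ℝ) ^ (j + 1) * t) :=
    funext fun t => by simp only [hf, ha_def, div_eq_inv_mul]
  refine ⟨hfa ▸ continuous_tsum_mul_cos (by simpa [norm_of_nonneg (ha0 _)] using ha), ?_⟩
  rintro β hβ - ⟨C, hC⟩
  have hb0 : (0 : ℝ) < b := by positivity
  have hr : 1 < (b : ℝ) ^ β := one_lt_rpow (by exact_mod_cast hb) hβ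
  obtain ⟨n, hn⟩ :=
    ((tendsto_add_atTop_nat 1).eventually (eventually_mul_sq_lt_pow hr (C * π ^ β / 2))).exists
  push_cast at hn
  have key : 2 / ((n : ℝ) + 1) ^ 2 ≤ C * π ^ β / ((b : ℝ) ^ β) ^ (n + 1) := by
    calc 2 / ((n : ℝ) + 1) ^ 2 = 2 * a n := by simp only [ha_def, div_eq_mul_inv]
      _ ≤ f 0 - f (π / (b : ℝ) ^ (n + 1)) := by
        simpa [hfa] using two_mul_le_tsum_sub_tsum_mul_cos_pow_mul_pi_div_pow hb0 ha ha0 n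
      _ ≤ C * |0 - π / (b : ℝ) ^ (n + 1)| ^ β := (le_abs_self _).trans (hC _ _)
      _ = C * π ^ β / ((b : ℝ) ^ β) ^ (n + 1) := by
        rw [zero_sub, abs_neg, abs_of_pos (by positivity), div_pow_rpow pi_pos.le hb0.le,
          mul_div_assoc]
  rw [div_le_div_iff₀ (by positivity) (by positivity)] at key
  linarith
end

section
/- Let $n \ge 2$ and let $u(x) = \sum_{j=1}^\infty \frac{1}{j^2}\mathrm{Re}(x_1+ix_2)^{2^j}$ on $\overline{\mathbb{B}_n}$. Then $u$ does not belong to $C^{0,\beta}(\overline{\mathbb{B}_n})$ for any $\beta \in (0,1]$. -/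
/-! Along the segment from `(1 - 2⁻ᵐ) e₁` to `e₁` the function `u` is the real series
`∑ j⁻² r ^ 2ʲ`, whose terms all decrease as `r` decreases; the `m`-th term alone drops by
at least `1 / (2 m²)`, because `(1 - 1/N) ^ N ≤ e⁻¹ < 1/2` for `N = 2ᵐ`. A `β`-Hölder
bound would give `1 / (2 m²) ≤ C 2^(-β m)`, which fails for large `m`. -/

open Metric Filter Topology

noncomputable section

lemma summable_one_div_nat_add_one_sq : Summable (fun j : ℕ => 1 / ((j : ℝ) + 1) ^ 2) := by
  simpa [add_comm] using (summable_nat_add_iff 1).2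
    (Real.summable_one_div_nat_pow.2 one_lt_two : Summable fun j : ℕ => 1 / (j : ℝ) ^ 2)

lemma coeff_mul_one_sub_pow_le_tsum_sub {a : ℕ → ℝ} (ha : ∀ j, 0 ≤ a j) (hs : Summable a)
    (d : ℕ → ℕ) {r : ℝ} (hr0 : 0 ≤ r) (hr1 : r ≤ 1) (m : ℕ) :
    a m * (1 - r ^ d m) ≤ ∑' j, a j - ∑' j, a j * r ^ d j := by
  have hpow : ∀ j, r ^ d j ≤ 1 := fun j => pow_le_one₀ hr0 hr1
  have hs' : Summable fun j => a j * r ^ d j :=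
    hs.of_nonneg_of_le (fun j => mul_nonneg (ha j) (pow_nonneg hr0 _))
      (fun j => mul_le_of_le_one_right (ha j) (hpow j))
  rw [← hs.tsum_sub hs']
  simp_rw [← mul_one_sub]
  have hterm : Summable fun j => a j * (1 - r ^ d j) := by
    simpa only [mul_one_sub] using hs.sub hs'
  exact hterm.le_tsum m fun j _ => mul_nonneg (ha j) (sub_nonneg.2 (hpow j))

lemma one_sub_inv_pow_self_le_half {N : ℕ} (hN : 1 ≤ N) :
    (1 - 1 / (N : ℝ)) ^ N ≤ 1 / 2 := by
  have h2e : 2 < Real.exp 1 := by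
    simpa [one_add_one_eq_two] using Real.add_one_lt_exp one_ne_zero
  calc (1 - 1 / (N : ℝ)) ^ N ≤ Real.exp (-1) :=
        Real.one_sub_div_pow_le_exp_neg (by exact_mod_cast hN)
    _ = 1 / Real.exp 1 := by rw [Real.exp_neg, one_div]
    _ ≤ 1 / 2 := one_div_le_one_div_of_le two_pos h2e.le

lemma eventually_mul_pow_succ_lt_div_sq {q : ℝ} (hq0 : 0 ≤ q) (hq1 : q < 1) (C : ℝ) {c : ℝ}
    (hc : 0 < c) : ∀ᶠ m : ℕ in atTop, C * q ^ (m + 1) < c / ((m : ℝ) + 1) ^ 2 := by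
  have hlim :
      Tendsto (fun m : ℕ => C * (((m + 1 : ℕ) : ℝ) ^ 2 * q ^ (m + 1))) atTop (𝓝 0) := by
    simpa using ((tendsto_pow_const_mul_const_pow_of_lt_one 2 hq0 hq1).comp
      (tendsto_add_atTop_nat 1)).const_mul C
  filter_upwards [hlim.eventually (gt_mem_nhds hc)] with m hm
  rw [lt_div_iff₀ (by positivity)]
  push_cast at hm
  linarith

lemma re_pow_of_smul_single {n : ℕ} {i k : Fin n} (hki : k ≠ i) (r : ℝ) (N : ℕ) :
    (((((r • EuclideanSpace.single i (1 : ℝ)) i : ℝ) : ℂ) +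
        ((r • EuclideanSpace.single i (1 : ℝ)) k : ℝ) * Complex.I) ^ N).re = r ^ N := by
  simp [hki, ← Complex.ofReal_pow]

def hadamardSeries (r : ℝ) : ℝ := ∑' j : ℕ, 1 / ((j : ℝ) + 1) ^ 2 * r ^ (2 ^ (j + 1))

lemma one_div_two_mul_sq_le_hadamardSeries_sub (m : ℕ) :
    1 / (2 * ((m : ℝ) + 1) ^ 2) ≤
      hadamardSeries 1 - hadamardSeries (1 - (1 / 2) ^ (m + 1)) := by
  set N : ℕ := 2 ^ (m + 1)
  have hN : 1 ≤ N := Nat.one_le_two_pow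
  have hr : (1 : ℝ) - (1 / 2) ^ (m + 1) = 1 - 1 / (N : ℝ) := by simp [N]
  have hr0 : (0 : ℝ) ≤ 1 - 1 / (N : ℝ) :=
    sub_nonneg.2 ((div_le_one₀ (by positivity)).2 (by exact_mod_cast hN))
  have hr1 : 1 - 1 / (N : ℝ) ≤ 1 := sub_le_self _ (by positivity)
  have hdrop := coeff_mul_one_sub_pow_le_tsum_sub (fun j => by positivity)
    summable_one_div_nat_add_one_sq (fun j => 2 ^ (j + 1)) hr0 hr1 m
  have hhalf := one_sub_inv_pow_self_le_half hN
  calc 1 / (2 * ((m : ℝ) + 1) ^ 2)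
        ≤ 1 / ((m : ℝ) + 1) ^ 2 * (1 - (1 - 1 / (N : ℝ)) ^ N) := by
        rw [one_div_mul_eq_div, div_le_div_iff₀ (by positivity) (by positivity)]
        nlinarith [sq_nonneg ((m : ℝ) + 1)]
    _ ≤ hadamardSeries 1 - hadamardSeries (1 - (1 / 2) ^ (m + 1)) := by
        simp only [hadamardSeries, hr, one_pow, mul_one]
        exact hdrop

/-- **The function `u x = ∑_{j≥1} j⁻² Re (x₁ + i x₂) ^ (2^j)` is not `β`-Hölder on the
closed unit ball for any `β ∈ (0, 1]`.** -/
theorem hadamard_type_series_not_holder (n : ℕ) (hn : 2 ≤ n)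
    (u : EuclideanSpace ℝ (Fin n) → ℝ)
    (hu : ∀ x, u x = ∑' j : ℕ, (1 / ((j : ℝ) + 1) ^ 2) *
        ((((x ⟨0, by omega⟩ : ℝ) : ℂ) + (x ⟨1, by omega⟩ : ℝ) * Complex.I) ^ (2 ^ (j + 1)) |>.re)) :
    ∀ β : ℝ, 0 < β → β ≤ 1 →
      ¬ ∃ C : ℝ, ∀ x ∈ closedBall (0 : EuclideanSpace ℝ (Fin n)) 1,
          ∀ y ∈ closedBall (0 : EuclideanSpace ℝ (Fin n)) 1,
            |u x - u y| ≤ C * ‖x - y‖ ^ β := by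
  rintro β hβ - ⟨C, hC⟩
  set e : EuclideanSpace ℝ (Fin n) := EuclideanSpace.single ⟨0, by omega⟩ 1
  have he : ‖e‖ = 1 := by simp [e]
  have hu_axis (r : ℝ) : u (r • e) = hadamardSeries r := by
    have h10 : (⟨1, by omega⟩ : Fin n) ≠ ⟨0, by omega⟩ := by simp
    rw [hu]
    simp_rw [e, re_pow_of_smul_single h10, hadamardSeries]
  have hmem (s : ℝ) (hs0 : 0 ≤ s) (hs1 : s ≤ 1) :
      s • e ∈ closedBall (0 : EuclideanSpace ℝ (Fin n)) 1 := by
    rwa [mem_closedBall_zero_iff, norm_smul, he, mul_one, Real.norm_of_nonneg hs0]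
  set q : ℝ := (1 / 2) ^ β
  have key (m : ℕ) : 1 / (2 * ((m : ℝ) + 1) ^ 2) ≤ C * q ^ (m + 1) := by
    set r : ℝ := 1 - (1 / 2) ^ (m + 1)
    have hr0 : 0 ≤ r := sub_nonneg.2 (pow_le_one₀ (by norm_num) (by norm_num))
    have hr1 : r ≤ 1 := sub_le_self _ (by positivity)
    have hdist : ‖(1 : ℝ) • e - r • e‖ = (1 / 2) ^ (m + 1) := by
      rw [← sub_smul, norm_smul, he, mul_one, Real.norm_of_nonneg (by simp [r])]
      simp [r]
    calc 1 / (2 * ((m : ℝ) + 1) ^ 2) ≤ hadamardSeries 1 - hadamardSeries r :=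
          one_div_two_mul_sq_le_hadamardSeries_sub m
      _ = u ((1 : ℝ) • e) - u (r • e) := by rw [hu_axis, hu_axis]
      _ ≤ C * ‖(1 : ℝ) • e - r • e‖ ^ β :=
          (le_abs_self _).trans (hC _ (hmem 1 zero_le_one le_rfl) _ (hmem r hr0 hr1))
      _ = C * q ^ (m + 1) := by rw [hdist, Real.rpow_pow_comm (by norm_num)]
  have hq1 : q < 1 := Real.rpow_lt_one (by norm_num) (by norm_num) hβ
  obtain ⟨m, hm⟩ :=
    (eventually_mul_pow_succ_lt_div_sq (by positivity) hq1 C one_half_pos).exists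
  rw [div_div] at hm
  exact (key m).not_gt hm
end
end
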